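/- arXiv:2112.06599 — 3 statements merged into one kernel-verified Lean document; each statement's English description precedes it below -/
import Mathlib

section
/- A subgroup H of a finite group G is isolated in G (i.e., for every x ∈ G either x ∈ H or ⟨x⟩ ∩ H = 1) if and only if ψ_H(G) = |H| + ψ(G) − ψ(H). -/
open Finset

/-- The order of `x` relative to the subgroup `H`: the least positive `m` with `x ^ m ∈ H`. -/
noncomputable def relOrder {G : Type*} [Group G] (H : Subgroup G) (x : G) : ℕ :=
  sInf {m : ℕ | 0 < m ∧ x ^ m ∈ H}

/-- `ψ_H(G)`, the sum of element orders of `G` relative to the subgroup `H`. -/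
noncomputable def psiRel (G : Type*) [Group G] [Fintype G] (H : Subgroup G) : ℕ :=
  ∑ x : G, relOrder H x

/-- `ψ(G)`, the sum of element orders of `G`. -/
noncomputable def psi (G : Type*) [Group G] [Fintype G] : ℕ :=
  ∑ x : G, orderOf x

section Aux

variable {G : Type*} [Group G] [Fintype G] (H : Subgroup G) (x : G)

lemma relOrder_set_nonempty : {m : ℕ | 0 < m ∧ x ^ m ∈ H}.Nonempty :=
  ⟨orderOf x, orderOf_pos x, by rw [pow_orderOf_eq_one]; exact H.one_mem⟩

lemma relOrder_mem : 0 < relOrder H x ∧ x ^ relOrder H x ∈ H :=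
  Nat.sInf_mem (relOrder_set_nonempty H x)

lemma relOrder_le {m : ℕ} (hm : 0 < m) (h : x ^ m ∈ H) : relOrder H x ≤ m :=
  Nat.sInf_le ⟨hm, h⟩

lemma relOrder_le_orderOf : relOrder H x ≤ orderOf x :=
  relOrder_le H x (orderOf_pos x) (by rw [pow_orderOf_eq_one]; exact H.one_mem)

lemma relOrder_eq_one (hx : x ∈ H) : relOrder H x = 1 :=
  le_antisymm (relOrder_le H x one_pos (by simpa using hx)) (relOrder_mem H x).1

lemma relOrder_eq_orderOf (h : Subgroup.zpowers x ⊓ H = ⊥) :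
    relOrder H x = orderOf x := by
  refine le_antisymm (relOrder_le_orderOf H x) ?_
  obtain ⟨hpos, hmem⟩ := relOrder_mem H x
  have h1 : x ^ relOrder H x = 1 := by
    have : x ^ relOrder H x ∈ Subgroup.zpowers x ⊓ H :=
      ⟨Subgroup.npow_mem_zpowers x _, hmem⟩
    rw [h] at this
    exact this
  exact Nat.le_of_dvd hpos (orderOf_dvd_of_pow_eq_one h1)

lemma inf_eq_bot_of_relOrder (h : relOrder H x = orderOf x) :
    Subgroup.zpowers x ⊓ H = ⊥ := by
  rw [eq_bot_iff]
  rintro g ⟨⟨k, rfl⟩, hgH⟩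
  simp only [Subgroup.mem_bot]
  have hord : (0 : ℤ) < (orderOf x : ℤ) := by exact_mod_cast orderOf_pos x
  set r : ℤ := k % (orderOf x : ℤ) with hr
  have hr0 : 0 ≤ r := Int.emod_nonneg k (by positivity)
  have hrlt : r < (orderOf x : ℤ) := Int.emod_lt_of_pos k hord
  have hxr : x ^ r = x ^ k := zpow_mod_orderOf x k
  rcases eq_or_lt_of_le hr0 with h0 | hpos
  · rw [← hxr, ← h0, zpow_zero]
  · exfalso
    have hmem : x ^ r.toNat ∈ H := by
      rw [← zpow_natCast, Int.toNat_of_nonneg hr0, hxr]; exact hgH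
    have := relOrder_le H x (by omega) hmem
    rw [h] at this
    omega

lemma sum_f_eq [Fintype H] [DecidablePred (· ∈ H)] :
    ∑ x : G, (if x ∈ H then 1 else orderOf x) = Nat.card H + psi G - psi H := by
  classical
  set s : Finset G := univ.filter (· ∈ H) with hs
  have hpsiH : psi H = ∑ x ∈ s, orderOf x := by
    rw [psi, Finset.sum_subtype (p := (· ∈ H)) s (fun x => by simp [hs]) (fun x : G => orderOf x)]
    exact Finset.sum_congr rfl fun x _ => (Subgroup.orderOf_coe x).symm
  have hcard : Nat.card H = s.card := by
    rw [Nat.card_eq_fintype_card, ← Fintype.card_coe]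
    exact Fintype.card_congr ((Equiv.subtypeEquivRight (by simp [hs])).symm)
  have hsplit : ∀ f : G → ℕ, ∑ x : G, f x = ∑ x ∈ s, f x + ∑ x ∈ sᶜ, f x :=
    fun f => (Finset.sum_add_sum_compl s f).symm
  rw [hsplit, hpsiH, hcard, psi, hsplit (fun x => orderOf x)]
  have h1 : ∑ x ∈ s, (if x ∈ H then 1 else orderOf x) = s.card := by
    rw [Finset.sum_congr rfl (fun x hx => if_pos (by simpa [hs] using hx))]
    simp
  have h2 : ∑ x ∈ sᶜ, (if x ∈ H then 1 else orderOf x) = ∑ x ∈ sᶜ, orderOf x :=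
    Finset.sum_congr rfl (fun x hx => if_neg (by simpa [hs] using hx))
  rw [h1, h2]
  omega

end Aux

theorem isolated_iff_psiRel {G : Type*} [Group G] [Fintype G] (H : Subgroup G) [Fintype H] :
    (∀ x : G, x ∈ H ∨ Subgroup.zpowers x ⊓ H = ⊥) ↔
      psiRel G H = Nat.card H + psi G - psi H := by
  classical
  rw [← sum_f_eq H]
  constructor
  · intro hiso
    refine Finset.sum_congr rfl fun x _ => ?_
    rcases hiso x with hx | hx
    · rw [relOrder_eq_one H x hx, if_pos hx]
    · rw [relOrder_eq_orderOf H x hx]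
      by_cases hmem : x ∈ H
      · rw [if_pos hmem]
        have : x ∈ Subgroup.zpowers x ⊓ H := ⟨Subgroup.mem_zpowers x, hmem⟩
        rw [hx, Subgroup.mem_bot] at this
        simp [this]
      · rw [if_neg hmem]
  · intro hsum x
    by_cases hmem : x ∈ H
    · exact Or.inl hmem
    · right
      have hle : ∀ y ∈ (univ : Finset G),
          relOrder H y ≤ (if y ∈ H then 1 else orderOf y) := by
        intro y _
        by_cases hy : y ∈ H
        · rw [if_pos hy, relOrder_eq_one H y hy]
        · rw [if_neg hy]; exact relOrder_le_orderOf H y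
      have := (Finset.sum_eq_sum_iff_of_le hle).1 hsum x (Finset.mem_univ x)
      rw [if_neg hmem] at this
      exact inf_eq_bot_of_relOrder H x this
end

section
/- There exist infinitely many finite (solvable) groups G with a subgroup H such that ψ_H(G) > ψ_{H_m}(C_n), where n = |G|, m = |H|, and H_m is the unique subgroup of order m of C_n. -/
open Finset

/-!
Take `G = (𝔽₈ ⋊ 𝔽₈ˣ) × M` with `M` cyclic of order `N + 1` and `H = 𝔽₈ˣ × M`, so `|G| = 56 |M|`
and `|H| = 7 |M|`. Relative to `H`, an element of `G` has order `1` on `H`, `2` on the other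
`7 |M|` involutions and `7` on the remaining `42 |M|` elements, so `ψ_H(G) = 45 · 7 |M|`.
In a cyclic group `C` every subgroup `K` is normal and `o_K(x)` is the order of `xK`, hence
`ψ_K(C) = |K| ψ(C / K) = |K| ψ(C₈) = 43 · 7 |M|`.
-/

section RelOrder

variable {G : Type*} [Group G] (H : Subgroup G)

lemma pow_smul_mk_one_eq_iff (x : G) (n : ℕ) :
    x ^ n • ((1 : G) : G ⧸ H) = (1 : G) ↔ x ^ n ∈ H := by
  rw [MulAction.Quotient.smul_mk, smul_eq_mul, mul_one, QuotientGroup.eq, mul_one, inv_mem_iff]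

lemma relOrder_eq_period (x : G) : relOrder H x = MulAction.period x ((1 : G) : G ⧸ H) := by
  simp only [relOrder, MulAction.period_eq_minimalPeriod,
    Function.minimalPeriod_eq_sInf_n_pos_IsPeriodicPt, MulAction.isPeriodicPt_smul_iff,
    pow_smul_mk_one_eq_iff]

variable {H}

lemma pow_mem_iff_relOrder_dvd {x : G} {n : ℕ} : x ^ n ∈ H ↔ relOrder H x ∣ n := by
  rw [relOrder_eq_period, ← MulAction.pow_smul_eq_iff_period_dvd, pow_smul_mk_one_eq_iff]

lemma relOrder_eq_of_pow_mem_iff {x : G} {d : ℕ} (h : ∀ n, x ^ n ∈ H ↔ d ∣ n) :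
    relOrder H x = d :=
  Nat.dvd_antisymm (pow_mem_iff_relOrder_dvd.mp ((h d).mpr dvd_rfl))
    ((h _).mp (pow_mem_iff_relOrder_dvd.mpr dvd_rfl))

lemma relOrder_eq_one_iff {x : G} : relOrder H x = 1 ↔ x ∈ H := by
  rw [← Nat.dvd_one, ← pow_mem_iff_relOrder_dvd, pow_one]

lemma relOrder_eq_prime {x : G} {p : ℕ} (hp : p.Prime) (hx : x ^ p = 1) (hxH : x ∉ H) :
    relOrder H x = p :=
  ((Nat.dvd_prime hp).mp (pow_mem_iff_relOrder_dvd.mp (hx ▸ H.one_mem))).resolve_left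
    (mt relOrder_eq_one_iff.mp hxH)

lemma relOrder_eq_orderOf_mk [H.Normal] (x : G) : relOrder H x = orderOf (x : G ⧸ H) :=
  relOrder_eq_of_pow_mem_iff fun n => by
    rw [orderOf_dvd_iff_pow_eq_one, ← QuotientGroup.mk_pow, QuotientGroup.eq_one_iff]

lemma relOrder_prod_top {M : Type*} [Group M] (a : G) (b : M) :
    relOrder (H.prod (⊤ : Subgroup M)) (a, b) = relOrder H a :=
  relOrder_eq_of_pow_mem_iff fun n => by
    rw [Subgroup.mem_prod, Prod.pow_fst, pow_mem_iff_relOrder_dvd,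
      and_iff_left (Subgroup.mem_top _)]

end RelOrder

section PsiRel

variable {G : Type*} [Group G] [Fintype G]

lemma psiRel_prod_top (H : Subgroup G) (M : Type*) [Group M] [Fintype M] :
    psiRel (G × M) (H.prod ⊤) = Fintype.card M * psiRel G H := by
  simp only [psiRel, Fintype.sum_prod_type, relOrder_prod_top, sum_const, card_univ, smul_eq_mul,
    mul_sum]

lemma sum_comp_quotientMk {A : Type*} [AddCommMonoid A] (K : Subgroup G) [Fintype (G ⧸ K)]
    (f : G ⧸ K → A) : ∑ x : G, f x = Nat.card K • ∑ y : G ⧸ K, f y := by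
  classical
  have hfiber (y : G ⧸ K) : #{x : G | (x : G ⧸ K) = y} = Nat.card K := by
    simpa [Nat.card_eq_fintype_card] using QuotientGroup.card_preimage_mk K {y}
  rw [← sum_fiberwise univ (fun x : G => (x : G ⧸ K)), smul_sum]
  refine sum_congr rfl fun y _ => ?_
  rw [sum_congr rfl fun x hx => congrArg f (mem_filter.mp hx).2, sum_const, hfiber]

lemma psiRel_eq_card_mul_psi_quotient (K : Subgroup G) [K.Normal] [Fintype (G ⧸ K)] :
    psiRel G K = Nat.card K * psi (G ⧸ K) := by
  simp only [psiRel, relOrder_eq_orderOf_mk, psi]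
  exact sum_comp_quotientMk K orderOf

lemma psi_eq_sum_divisors_mul_totient [IsCyclic G] :
    psi G = ∑ d ∈ (Fintype.card G).divisors, d * Nat.totient d := by
  classical
  rw [psi, ← sum_fiberwise_of_maps_to (g := orderOf) (t := (Fintype.card G).divisors)
    fun x _ => Nat.mem_divisors.mpr ⟨orderOf_dvd_card, Fintype.card_ne_zero⟩]
  refine sum_congr rfl fun d hd => ?_
  rw [sum_congr rfl fun x hx => (mem_filter.mp hx).2, sum_const, smul_eq_mul,
    IsCyclic.card_orderOf_eq_totient (Nat.dvd_of_mem_divisors hd), mul_comm]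

lemma psiRel_of_isCyclic {C : Type*} [Group C] [Fintype C] [IsCyclic C] (K : Subgroup C) {n : ℕ}
    (hcard : Fintype.card C = n * Nat.card K) :
    psiRel C K = Nat.card K * ∑ d ∈ n.divisors, d * Nat.totient d := by
  have : K.Normal := by
    let := IsCyclic.commGroup (α := C)
    infer_instance
  have : IsCyclic (C ⧸ K) := isCyclic_of_surjective _ (QuotientGroup.mk'_surjective K)
  let : Fintype (C ⧸ K) := Fintype.ofFinite _
  have hquot : Fintype.card (C ⧸ K) = n := by
    rw [← Nat.card_eq_fintype_card, K.card_eq_card_quotient_mul_card_subgroup] at hcard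
    rw [← Nat.card_eq_fintype_card]
    exact Nat.eq_of_mul_eq_mul_right Nat.card_pos hcard
  rw [psiRel_eq_card_mul_psi_quotient, psi_eq_sum_divisors_mul_totient, hquot]

end PsiRel

section SemidirectProduct

variable {N G : Type*} [Group N] [Group G] (φ : G →* MulAut N)

instance SemidirectProduct.instFintype [Fintype N] [Fintype G] : Fintype (N ⋊[φ] G) :=
  Fintype.ofEquiv _ SemidirectProduct.equivProd.symm

instance SemidirectProduct.isSolvable [Group.IsSolvable N] [Group.IsSolvable G] :
    Group.IsSolvable (N ⋊[φ] G) :=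
  Group.isSolvable_of_ker_le_range SemidirectProduct.inl SemidirectProduct.rightHom
    SemidirectProduct.range_inl_eq_ker_rightHom.ge

end SemidirectProduct

namespace AffineGroup8

abbrev V : Type := Multiplicative (ZMod 2 × ZMod 2 × ZMod 2)

/-- Multiplication by a root `α` of `X³ + X + 1` on `𝔽₈ = 𝔽₂[α]`, in the basis `1, α, α²`. -/
def mulRoot : V ≃* V where
  toFun v := .ofAdd (v.toAdd.2.2, v.toAdd.1 + v.toAdd.2.2, v.toAdd.2.1)
  invFun v := .ofAdd (v.toAdd.2.1 + v.toAdd.1, v.toAdd.2.2, v.toAdd.1)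
  left_inv := by decide
  right_inv := by decide
  map_mul' := by decide

lemma mulRoot_pow_seven : mulRoot ^ 7 = 1 := MulEquiv.ext (by decide)

def mulRootPow : Multiplicative (ZMod 7) →* MulAut V where
  toFun k := mulRoot ^ k.toAdd.val
  map_one' := rfl
  map_mul' a b := by
    rw [toAdd_mul, ZMod.val_add, ← pow_eq_pow_mod _ mulRoot_pow_seven, pow_add]

end AffineGroup8

abbrev AffineGroup8 : Type := AffineGroup8.V ⋊[AffineGroup8.mulRootPow] Multiplicative (ZMod 7)

namespace AffineGroup8

abbrev linearPart : Subgroup AffineGroup8 := SemidirectProduct.inr.range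

lemma pow_two_or_pow_seven : ∀ x : AffineGroup8, x ^ 2 = 1 ∨ x ^ 7 = 1 := by decide

lemma relOrder_linearPart (x : AffineGroup8) :
    relOrder linearPart x = if x ∈ linearPart then 1 else if x ^ 2 = 1 then 2 else 7 := by
  split_ifs with hmem hsq
  · exact relOrder_eq_one_iff.mpr hmem
  · exact relOrder_eq_prime Nat.prime_two hsq hmem
  · exact relOrder_eq_prime (by norm_num) ((pow_two_or_pow_seven x).resolve_left hsq) hmem

lemma psiRel_linearPart : psiRel AffineGroup8 linearPart = 315 := by
  simp only [psiRel, relOrder_linearPart]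
  decide

lemma card_eq : Fintype.card AffineGroup8 = 56 := rfl

lemma card_linearPart : Nat.card linearPart = 7 := by
  rw [Nat.card_eq_fintype_card]
  decide

end AffineGroup8

theorem infinitely_many_counterexamples :
    ∀ N : ℕ, ∃ (G : Type) (_ : Group G) (_ : Fintype G), IsSolvable G ∧
      N < Fintype.card G ∧
      ∃ H : Subgroup G,
        ∀ (C : Type) (_ : Group C) (_ : Fintype C), IsCyclic C →
          Fintype.card C = Fintype.card G →
          ∀ K : Subgroup C, Nat.card K = Nat.card H →
            psiRel C K < psiRel G H := by
  intro N
  let M := Multiplicative (ZMod (N + 1))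
  have hM : Fintype.card M = N + 1 := by rw [Fintype.card_multiplicative, ZMod.card]
  refine ⟨AffineGroup8 × M, inferInstance, inferInstance, (inferInstance : Group.IsSolvable _),
    ?_, AffineGroup8.linearPart.prod ⊤, ?_⟩
  · rw [Fintype.card_prod, AffineGroup8.card_eq, hM]
    omega
  intro C _ _ _ hcard K hK
  have hKcard : Nat.card K = 7 * (N + 1) := by
    rw [hK, Nat.card_congr (Subgroup.prodEquiv _ _).toEquiv, Nat.card_prod,
      AffineGroup8.card_linearPart, Subgroup.card_top, Nat.card_eq_fintype_card, hM]
  have hCcard : Fintype.card C = 8 * Nat.card K := by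
    rw [hcard, Fintype.card_prod, AffineGroup8.card_eq, hM, hKcard]
    ring
  have hpsi8 : ∑ d ∈ Nat.divisors 8, d * Nat.totient d = 43 := by decide
  rw [psiRel_of_isCyclic K hCcard, hpsi8, hKcard, psiRel_prod_top, AffineGroup8.psiRel_linearPart,
    hM]
  omega
end

section
/- Let G be a group of order n = mq where H ≤ G has prime index q. Then ψ_H(G) ≤ ψ_{H_m}(C_n), where H_m is the unique subgroup of order m of C_n; moreover ψ_{H_m}(C_n) = m(q² − q + 1). -/
open Finset

lemma relOrder_spec {G : Type*} [Group G] [Fintype G] (H : Subgroup G) (x : G) :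
    0 < relOrder H x ∧ x ^ relOrder H x ∈ H := by
  have hne : {m : ℕ | 0 < m ∧ x ^ m ∈ H}.Nonempty :=
    ⟨Fintype.card G, Fintype.card_pos, by rw [pow_card_eq_one]; exact H.one_mem⟩
  exact Nat.sInf_mem hne

lemma relOrder_le_s12 {G : Type*} [Group G] (H : Subgroup G) (x : G) {k : ℕ}
    (hk : 0 < k) (h : x ^ k ∈ H) : relOrder H x ≤ k :=
  Nat.sInf_le ⟨hk, h⟩

lemma relOrder_eq_one_s12 {G : Type*} [Group G] (H : Subgroup G) {x : G} (h : x ∈ H) :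
    relOrder H x = 1 := by
  have h1 : relOrder H x ≤ 1 := relOrder_le_s12 H x one_pos (by simpa using h)
  have h2 : 0 < relOrder H x :=
    (Nat.sInf_mem (⟨1, one_pos, by simpa using h⟩ :
      {m : ℕ | 0 < m ∧ x ^ m ∈ H}.Nonempty)).1
  omega

lemma relOrder_le_index {G : Type*} [Group G] [Fintype G] (H : Subgroup G) (x : G) :
    relOrder H x ≤ H.index := by
  obtain ⟨hd, _⟩ := relOrder_spec H x
  set d := relOrder H x with hddef
  have key : ∀ i j : Fin d, (i : ℕ) ≤ (j : ℕ) →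
      (QuotientGroup.mk (x ^ (i : ℕ)) : G ⧸ H) = QuotientGroup.mk (x ^ (j : ℕ)) →
      (i : ℕ) = (j : ℕ) := by
    intro i j hle h
    rw [QuotientGroup.eq] at h
    have hpow : x ^ (j : ℕ) = x ^ (i : ℕ) * x ^ ((j : ℕ) - (i : ℕ)) := by
      rw [← pow_add, Nat.add_sub_cancel' hle]
    rw [hpow, inv_mul_cancel_left] at h
    by_contra hne
    have hpos : 0 < (j : ℕ) - (i : ℕ) := by omega
    have := relOrder_le_s12 H x hpos h
    have := j.isLt
    omega
  have hinj : Function.Injective (fun i : Fin d => (QuotientGroup.mk (x ^ (i : ℕ)) : G ⧸ H)) := by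
    intro i j h
    apply Fin.ext
    rcases le_total (i : ℕ) (j : ℕ) with hle | hle
    · exact key i j hle h
    · exact (key j i hle h.symm).symm
  calc d = Nat.card (Fin d) := by simp
    _ ≤ Nat.card (G ⧸ H) := Nat.card_le_card_of_injective _ hinj
    _ = H.index := (Subgroup.index_eq_card H).symm

lemma sum_ite_mem_card {G : Type*} [Group G] [Fintype G] (H : Subgroup G)
    [DecidablePred (· ∈ H)]
    (n m q : ℕ) (hn : Fintype.card G = n) (hm : Nat.card H = m) (hmq : n = m * q)
    (hq1 : 1 ≤ q) :
    ∑ x : G, (if x ∈ H then 1 else q) = m * (q ^ 2 - q + 1) := by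
  obtain ⟨r, rfl⟩ : ∃ r, q = r + 1 := ⟨q - 1, by omega⟩
  have hcard : (univ.filter (fun x : G => x ∈ H)).card = m := by
    rw [← hm, Nat.card_eq_fintype_card, Fintype.card_subtype]
  have hcard' : (univ.filter (fun x : G => ¬ x ∈ H)).card = m * r := by
    have := Finset.card_filter_add_card_filter_not
      (s := (univ : Finset G)) (p := fun x : G => x ∈ H)
    rw [Finset.card_univ, hn, hcard] at this
    have : m * (r + 1) = m + (univ.filter (fun x : G => ¬ x ∈ H)).card := by
      rw [← hmq]; omega
    rw [Nat.mul_add] at this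
    omega
  rw [Finset.sum_ite, Finset.sum_const, Finset.sum_const, hcard, hcard', smul_eq_mul,
    smul_eq_mul]
  have : (r + 1) ^ 2 - (r + 1) + 1 = r * (r + 1) + 1 := by ring_nf; omega
  rw [this]
  ring

theorem psiRel_le_of_prime_index {G : Type*} [Group G] [Fintype G]
    (n m q : ℕ) [NeZero n] (hq : q.Prime) (hn : Fintype.card G = n) (hmq : n = m * q)
    (H : Subgroup G) (hm : Nat.card H = m) (hind : H.index = q)
    (Hm : Subgroup (Multiplicative (ZMod n))) (hHm : Nat.card Hm = m) :
    psiRel (Multiplicative (ZMod n)) Hm = m * (q ^ 2 - q + 1) ∧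
      psiRel G H ≤ psiRel (Multiplicative (ZMod n)) Hm := by
  classical
  set A := Multiplicative (ZMod n) with hA
  have hcardA : Fintype.card A = n := by
    simpa [hA] using (ZMod.card n)
  have hm0 : 0 < m := by rw [← hm]; exact Nat.card_pos
  have hq1 : 1 ≤ q := hq.one_lt.le.trans' (by omega)
  -- index of Hm is q
  have hindm : Hm.index = q := by
    have h1 : Nat.card Hm * Hm.index = Nat.card A := Subgroup.card_mul_index Hm
    rw [hHm, Nat.card_eq_fintype_card, hcardA] at h1
    exact Nat.eq_of_mul_eq_mul_left hm0 (h1.trans hmq)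
  -- relOrder for the cyclic group
  have hrel : ∀ x : A, relOrder Hm x = if x ∈ Hm then 1 else q := by
    intro x
    by_cases hx : x ∈ Hm
    · simp [hx, relOrder_eq_one_s12 Hm hx]
    · simp only [hx, if_false]
      have hy : (QuotientGroup.mk x : A ⧸ Hm) ≠ 1 := by
        simpa [QuotientGroup.eq_one_iff] using hx
      have hdvd : orderOf (QuotientGroup.mk x : A ⧸ Hm) ∣ q := by
        have := orderOf_dvd_natCard (QuotientGroup.mk x : A ⧸ Hm)
        rwa [← Subgroup.index_eq_card, hindm] at this
      have horder : orderOf (QuotientGroup.mk x : A ⧸ Hm) = q := by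
        rcases (Nat.Prime.eq_one_or_self_of_dvd hq _ hdvd) with h1 | h1
        · exact absurd (orderOf_eq_one_iff.mp h1) hy
        · exact h1
      have hmemiff : ∀ k : ℕ, x ^ k ∈ Hm ↔ (QuotientGroup.mk x : A ⧸ Hm) ^ k = 1 := by
        intro k
        rw [← QuotientGroup.mk_pow, QuotientGroup.eq_one_iff]
      apply le_antisymm
      · exact relOrder_le_s12 Hm x hq.pos ((hmemiff q).2 (by rw [← horder]; exact pow_orderOf_eq_one _))
      · obtain ⟨hpos, hmem⟩ := relOrder_spec Hm x
        have : q ∣ relOrder Hm x := by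
          rw [← horder]
          exact orderOf_dvd_of_pow_eq_one ((hmemiff _).1 hmem)
        exact Nat.le_of_dvd hpos this
  have heq : psiRel A Hm = m * (q ^ 2 - q + 1) := by
    rw [psiRel]
    rw [Finset.sum_congr rfl (fun x _ => hrel x)]
    exact sum_ite_mem_card Hm n m q hcardA hHm hmq hq1
  refine ⟨heq, ?_⟩
  have hle : psiRel G H ≤ ∑ x : G, (if x ∈ H then 1 else q) := by
    apply Finset.sum_le_sum
    intro x _
    by_cases hx : x ∈ H
    · simp [hx, relOrder_eq_one_s12 H hx]
    · simp only [hx, if_false]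
      have := relOrder_le_index H x
      rwa [hind] at this
  rw [heq]
  calc psiRel G H ≤ ∑ x : G, (if x ∈ H then 1 else q) := hle
    _ = m * (q ^ 2 - q + 1) := sum_ite_mem_card H n m q hn hm hmq hq1
end
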